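/- For all positive reals a ≠ b, 1 ≤ I(a,b)/λ_1(a,b) ≤ 4·log 2/e, where I(a,b) = (1/e)(b^b/a^a)^{1/(b-a)} and λ_1(a,b) = (b-a)²/(4(a log a + b log b - (a+b) log((a+b)/2))). -/

import Mathlib

/-!
Write `a = c (1 - t)`, `b = c (1 + t)` with `c = (a + b) / 2`. Then `I / λ₁ = ψ(t) = e^{μ(t)} ν(t)`,
an even function of `t`, so it suffices that `ψ` increases on `(0, 1]`, where `ψ(0⁺) = 1` and
`ψ(1) = 4 log 2 / e`. With `A = artanh t` and `L = -log (1 - t²)` one finds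
`ψ' = e^μ ((t + A) L - 2 t A²) / t⁴`, so everything rests on `2 t A² ≤ (t + A) L`. After dividing
by `t + A` the derivative no longer involves `L`, and its sign reduces this to `A³ ≤ t³ / (1 - t²)`, which is Lazarević's inequality
`(sinh y / y)³ ≥ cosh y` at `y = A`. That bound, and the two rational bounds on `A²` and `A` below
it, are each obtained by comparing derivatives with the next one; the last comparison is
`7 t⁴ - 3 t⁶ ≥ 0`.
-/

open Real Set Filter Topology

theorem le_of_hasDerivAt_le_of_le {f g f' g' : ℝ → ℝ} {a b x : ℝ}
    (hf : ∀ y ∈ Ico a b, HasDerivAt f (f' y) y) (hg : ∀ y ∈ Ico a b, HasDerivAt g (g' y) y)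
    (hfg : ∀ y ∈ Ioo a b, f' y ≤ g' y) (ha : f a ≤ g a) (hx : x ∈ Ico a b) : f x ≤ g x := by
  have hmono : MonotoneOn (fun y => g y - f y) (Ico a b) := by
    refine monotoneOn_of_hasDerivWithinAt_nonneg (f' := fun y => g' y - f' y) (convex_Ico a b)
      (fun y hy => ((hg y hy).sub (hf y hy)).continuousAt.continuousWithinAt) ?_ ?_ <;>
      rw [interior_Ico]
    · exact fun y hy => ((hg y (Ioo_subset_Ico_self hy)).sub
        (hf y (Ioo_subset_Ico_self hy))).hasDerivWithinAt
    · exact fun y hy => sub_nonneg.2 (hfg y hy)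
  linarith [hmono (left_mem_Ico.2 (hx.1.trans_lt hx.2)) hx hx.1]

theorem MonotoneOn.ge_of_tendsto_nhdsGT {f : ℝ → ℝ} {a b l x : ℝ} (hf : MonotoneOn f (Ioo a b))
    (hl : Tendsto f (𝓝[>] a) (𝓝 l)) (hx : x ∈ Ioo a b) : l ≤ f x := by
  refine le_of_tendsto hl ?_
  filter_upwards [Ioo_mem_nhdsGT hx.1] with y hy
  exact hf ⟨hy.1, hy.2.trans hx.2⟩ hx hy.2.le

theorem HasDerivAt.tendsto_div_nhdsGT_zero {f : ℝ → ℝ} {f' : ℝ} (hf : HasDerivAt f f' 0)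
    (h0 : f 0 = 0) : Tendsto (fun x => f x / x) (𝓝[>] 0) (𝓝 f') := by
  simpa [h0, div_eq_inv_mul] using hf.tendsto_slope_zero_right

namespace Real

theorem artanh_eq_half_log_sub {x : ℝ} (hx : x ∈ Ioo (-1) 1) :
    artanh x = (log (1 + x) - log (1 - x)) / 2 := by
  rw [artanh_eq_half_log (Ioo_subset_Icc_self hx), log_div (by linarith [hx.1]) (by linarith [hx.2])]
  ring

theorem hasDerivAt_artanh {x : ℝ} (hx : x ∈ Ioo (-1) 1) : HasDerivAt artanh (1 - x ^ 2)⁻¹ x := by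
  have h1 : 1 + x ≠ 0 := by linarith [hx.1]
  have h2 : 1 - x ≠ 0 := by linarith [hx.2]
  have h := ((((hasDerivAt_id x).const_add 1).log h1).sub
    (((hasDerivAt_id x).const_sub 1).log h2)).div_const 2
  refine (h.congr_of_eventuallyEq ?_).congr_deriv ?_
  · filter_upwards [isOpen_Ioo.mem_nhds hx] with y hy using artanh_eq_half_log_sub hy
  · have h3 : 1 - x ^ 2 ≠ 0 := by nlinarith [hx.1, hx.2]
    simp only [id]
    field_simp
    ring

theorem artanh_le {x : ℝ} (hx : x ∈ Ico 0 1) :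
    artanh x ≤ x * (3 - 2 * x ^ 2 + x ^ 4) / (3 * (1 - x ^ 2)) := by
  refine le_of_hasDerivAt_le_of_le (fun y hy => hasDerivAt_artanh ⟨by linarith [hy.1], hy.2⟩)
    (g := fun y => y * (3 - 2 * y ^ 2 + y ^ 4) / (3 * (1 - y ^ 2)))
    (g' := fun y => (3 - 3 * y ^ 2 + 7 * y ^ 4 - 3 * y ^ 6) / (3 * (1 - y ^ 2) ^ 2))
    (fun y hy => ?_) (fun y hy => ?_) (by simp) hx
  · have h : 1 - y ^ 2 ≠ 0 := by nlinarith [hy.1, hy.2]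
    refine (((hasDerivAt_id y).fun_mul (((hasDerivAt_const y 3).fun_sub
      ((hasDerivAt_pow 2 y).const_mul 2)).fun_add (hasDerivAt_pow 4 y))).fun_div
      (((hasDerivAt_const y 1).fun_sub (hasDerivAt_pow 2 y)).const_mul 3)
      (by simpa using h)).congr_deriv ?_
    simp only [id]
    field_simp
    ring
  · have h : 0 < 1 - y ^ 2 := by nlinarith [hy.1, hy.2]
    rw [inv_eq_one_div, div_le_div_iff₀ h (by positivity)]
    nlinarith [pow_pos hy.1 4, hy.2]

theorem artanh_sq_le {x : ℝ} (hx : x ∈ Ico 0 1) :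
    artanh x ^ 2 ≤ x ^ 2 * (3 - x ^ 2) / (3 * (1 - x ^ 2)) := by
  refine le_of_hasDerivAt_le_of_le
    (fun y hy => (hasDerivAt_artanh ⟨by linarith [hy.1], hy.2⟩).pow 2)
    (g := fun y => y ^ 2 * (3 - y ^ 2) / (3 * (1 - y ^ 2)))
    (g' := fun y => (6 * y - 4 * y ^ 3 + 2 * y ^ 5) / (3 * (1 - y ^ 2) ^ 2))
    (fun y hy => ?_) (fun y hy => ?_) (by simp) hx
  · have h : 1 - y ^ 2 ≠ 0 := by nlinarith [hy.1, hy.2]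
    refine (((hasDerivAt_pow 2 y).fun_mul ((hasDerivAt_const y 3).fun_sub
      (hasDerivAt_pow 2 y))).fun_div
      (((hasDerivAt_const y 1).fun_sub (hasDerivAt_pow 2 y)).const_mul 3)
      (by simpa using h)).congr_deriv ?_
    field_simp
    ring
  · have h : 0 < 1 - y ^ 2 := by nlinarith [hy.1, hy.2]
    calc (2 : ℕ) * artanh y ^ (2 - 1) * (1 - y ^ 2)⁻¹
        ≤ 2 * (y * (3 - 2 * y ^ 2 + y ^ 4) / (3 * (1 - y ^ 2))) * (1 - y ^ 2)⁻¹ := by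
          push_cast
          gcongr
          simpa using artanh_le (Ioo_subset_Ico_self hy)
      _ = (6 * y - 4 * y ^ 3 + 2 * y ^ 5) / (3 * (1 - y ^ 2) ^ 2) := by
          field_simp
          ring

theorem artanh_pow_three_le {x : ℝ} (hx : x ∈ Ico 0 1) : artanh x ^ 3 ≤ x ^ 3 / (1 - x ^ 2) := by
  refine le_of_hasDerivAt_le_of_le
    (fun y hy => (hasDerivAt_artanh ⟨by linarith [hy.1], hy.2⟩).pow 3)
    (g := fun y => y ^ 3 / (1 - y ^ 2))
    (g' := fun y => (3 * y ^ 2 - y ^ 4) / (1 - y ^ 2) ^ 2)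
    (fun y hy => ?_) (fun y hy => ?_) (by simp) hx
  · have h : 1 - y ^ 2 ≠ 0 := by nlinarith [hy.1, hy.2]
    refine ((hasDerivAt_pow 3 y).fun_div ((hasDerivAt_const y 1).fun_sub (hasDerivAt_pow 2 y))
      (by simpa using h)).congr_deriv ?_
    field_simp
    ring
  · have h : 0 < 1 - y ^ 2 := by nlinarith [hy.1, hy.2]
    calc (3 : ℕ) * artanh y ^ (3 - 1) * (1 - y ^ 2)⁻¹
        ≤ 3 * (y ^ 2 * (3 - y ^ 2) / (3 * (1 - y ^ 2))) * (1 - y ^ 2)⁻¹ := by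
          push_cast
          gcongr
          exact artanh_sq_le (Ioo_subset_Ico_self hy)
      _ = (3 * y ^ 2 - y ^ 4) / (1 - y ^ 2) ^ 2 := by
          field_simp

theorem two_mul_mul_artanh_sq_le {x : ℝ} (hx : x ∈ Ioo 0 1) :
    2 * x * artanh x ^ 2 ≤ (x + artanh x) * -log (1 - x ^ 2) := by
  set F : ℝ → ℝ := fun y => -log (1 - y ^ 2) - 2 * y * artanh y ^ 2 / (y + artanh y)
  have hF : ∀ y ∈ Ioo (0 : ℝ) 1, HasDerivAt F
      (2 * (y ^ 3 - artanh y ^ 3 * (1 - y ^ 2)) / ((1 - y ^ 2) * (y + artanh y) ^ 2)) y := by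
    intro y hy
    have h : 1 - y ^ 2 ≠ 0 := by nlinarith [hy.1, hy.2]
    have hne : y + artanh y ≠ 0 := (add_pos hy.1 (artanh_pos hy)).ne'
    have hA := hasDerivAt_artanh ⟨by linarith [hy.1], hy.2⟩
    refine (((((hasDerivAt_const y 1).fun_sub (hasDerivAt_pow 2 y)).log h).neg).fun_sub
      ((((hasDerivAt_id y).const_mul 2).fun_mul (hA.pow 2)).fun_div ((hasDerivAt_id y).fun_add hA)
      hne)).congr_deriv ?_
    simp only [id, Pi.pow_apply]
    field_simp
    ring
  have hF' : ∀ y ∈ Ioo (0 : ℝ) 1,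
      0 ≤ 2 * (y ^ 3 - artanh y ^ 3 * (1 - y ^ 2)) / ((1 - y ^ 2) * (y + artanh y) ^ 2) := by
    intro y hy
    have h : 0 < 1 - y ^ 2 := by nlinarith [hy.1, hy.2]
    have := (le_div_iff₀ h).1 (artanh_pow_three_le (Ioo_subset_Ico_self hy))
    have := artanh_pos hy
    positivity
  have hlog : Tendsto (fun y : ℝ => -log (1 - y ^ 2)) (𝓝[>] 0) (𝓝 0) := by
    have : ContinuousAt (fun y : ℝ => -log (1 - y ^ 2)) 0 := by fun_prop (disch := norm_num)
    simpa using this.tendsto.mono_left nhdsWithin_le_nhds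
  have hfrac : Tendsto (fun y => 2 * y * artanh y ^ 2 / (y + artanh y)) (𝓝[>] 0) (𝓝 0) := by
    have hA := hasDerivAt_artanh (x := 0) ⟨by norm_num, by norm_num⟩
    have hA0 : Tendsto artanh (𝓝[>] 0) (𝓝 0) := by
      simpa using hA.continuousAt.tendsto.mono_left nhdsWithin_le_nhds
    have := ((hA0.pow 2).const_mul 2).div
      (tendsto_const_nhds.add (hA.tendsto_div_nhdsGT_zero artanh_zero))
      (by norm_num : (1 : ℝ) + (1 - 0 ^ 2)⁻¹ ≠ 0)
    rw [show 2 * (0 : ℝ) ^ 2 / (1 + (1 - 0 ^ 2)⁻¹) = 0 by norm_num] at this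
    refine this.congr' ?_
    filter_upwards [self_mem_nhdsWithin] with y (hy : 0 < y)
    have : 0 < y + artanh y := add_pos_of_pos_of_nonneg hy (artanh_nonneg hy.le)
    simp only [Pi.div_apply]
    field_simp
  have hmono : MonotoneOn F (Ioo 0 1) :=
    monotoneOn_of_hasDerivWithinAt_nonneg (convex_Ioo 0 1)
      (fun y hy => (hF y hy).continuousAt.continuousWithinAt)
      (fun y hy => (hF y (interior_subset hy)).hasDerivWithinAt)
      (fun y hy => hF' y (interior_subset hy))
  have := hmono.ge_of_tendsto_nhdsGT (by simpa using hlog.sub hfrac) hx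
  have hpos : 0 < x + artanh x := add_pos hx.1 (artanh_pos hx)
  rw [sub_nonneg, div_le_iff₀ hpos] at this
  linarith

end Real

theorem hasDerivAt_one_add_mul_log {x : ℝ} (hx : -1 < x) :
    HasDerivAt (fun t => (1 + t) * log (1 + t)) (log (1 + x) + 1) x :=
  ((hasDerivAt_mul_log (by linarith : 1 + x ≠ 0)).comp x
    ((hasDerivAt_id x).const_add 1)).congr_deriv (mul_one _)

theorem hasDerivAt_one_sub_mul_log {x : ℝ} (hx : x < 1) :
    HasDerivAt (fun t => (1 - t) * log (1 - t)) (-(log (1 - x) + 1)) x :=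
  ((hasDerivAt_mul_log (by linarith : 1 - x ≠ 0)).comp x
    ((hasDerivAt_id x).const_sub 1)).congr_deriv (by ring)

noncomputable def identricMean (a b : ℝ) : ℝ := 1 / exp 1 * (b ^ b / a ^ a) ^ (1 / (b - a))

noncomputable def lambdaOne (a b : ℝ) : ℝ :=
  (b - a) ^ 2 / (4 * (a * log a + b * log b - (a + b) * log ((a + b) / 2)))

namespace IdentricRatio

noncomputable def mu (t : ℝ) : ℝ := ((1 + t) * log (1 + t) - (1 - t) * log (1 - t)) / (2 * t) - 1

noncomputable def nu (t : ℝ) : ℝ := ((1 + t) * log (1 + t) + (1 - t) * log (1 - t)) / t ^ 2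

noncomputable def psi (t : ℝ) : ℝ := exp (mu t) * nu t

theorem psi_neg (t : ℝ) : psi (-t) = psi t := by
  simp only [psi, mu, nu, show 1 + -t = 1 - t by ring, show 1 - -t = 1 + t by ring, neg_sq,
    mul_neg, div_neg, ← neg_div, neg_sub, add_comm ((1 - t) * log (1 - t))]

theorem psi_abs (t : ℝ) : psi |t| = psi t := by
  rcases abs_choice t with h | h <;> rw [h]
  exact psi_neg t

/-- Since `log 0 = 0`, the term `(1 - t) * log (1 - t)` is continuous at `t = 1`, so this value is
also the limit of `psi` at `1⁻`. -/
theorem psi_one : psi 1 = 4 * log 2 / exp 1 := by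
  norm_num [psi, mu, nu, exp_sub, exp_log]
  ring

theorem continuousOn_psi : ContinuousOn psi (Ioi 0) := by
  unfold psi mu nu
  fun_prop (disch := intro t ht; simp at ht ⊢; positivity)

theorem hasDerivAt_psi {t : ℝ} (ht : t ∈ Ioo 0 1) :
    HasDerivAt psi (exp (mu t) *
      ((t + artanh t) * -log (1 - t ^ 2) - 2 * t * artanh t ^ 2) / t ^ 4) t := by
  have h1 : 0 < 1 + t := by linarith [ht.1]
  have h2 : 0 < 1 - t := by linarith [ht.2]
  have hp := hasDerivAt_one_add_mul_log (by linarith [ht.1] : -1 < t)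
  have hm := hasDerivAt_one_sub_mul_log ht.2
  have hmu : HasDerivAt mu _ t :=
    ((hp.fun_sub hm).fun_div ((hasDerivAt_id t).const_mul 2) (by simp [ht.1.ne'])).sub_const 1
  have hnu : HasDerivAt nu _ t := (hp.fun_add hm).fun_div (hasDerivAt_pow 2 t) (by simp [ht.1.ne'])
  refine (hmu.exp.fun_mul hnu).congr_deriv ?_
  rw [artanh_eq_half_log_sub ⟨by linarith [ht.1], ht.2⟩,
    show 1 - t ^ 2 = (1 + t) * (1 - t) by ring, log_mul h1.ne' h2.ne']
  have ht0 : t ≠ 0 := ht.1.ne'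
  simp only [mu, nu, id]
  field_simp
  ring

theorem monotoneOn_psi : MonotoneOn psi (Ioc 0 1) := by
  refine monotoneOn_of_hasDerivWithinAt_nonneg (convex_Ioc 0 1) (f' := fun t => exp (mu t) *
      ((t + artanh t) * -log (1 - t ^ 2) - 2 * t * artanh t ^ 2) / t ^ 4)
    (continuousOn_psi.mono Ioc_subset_Ioi_self) ?_ ?_ <;> rw [interior_Ioc]
  · exact fun t ht => (hasDerivAt_psi ht).hasDerivWithinAt
  · intro t ht
    have := two_mul_mul_artanh_sq_le ht
    have := ht.1
    positivity

theorem tendsto_mu_nhdsGT_zero : Tendsto mu (𝓝[>] 0) (𝓝 0) := by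
  have hP : HasDerivAt (fun t => (1 + t) * log (1 + t) - (1 - t) * log (1 - t)) 2 0 := by
    refine ((hasDerivAt_one_add_mul_log (by norm_num)).fun_sub
      (hasDerivAt_one_sub_mul_log (by norm_num))).congr_deriv ?_
    norm_num
  have := ((hP.tendsto_div_nhdsGT_zero (by simp)).div_const 2).sub_const 1
  rw [show (2 : ℝ) / 2 - 1 = 0 by norm_num] at this
  refine this.congr fun t => ?_
  simp only [mu]
  ring

theorem tendsto_nu_nhdsGT_zero : Tendsto nu (𝓝[>] 0) (𝓝 1) := by
  have hQ : Tendsto (fun t => (1 + t) * log (1 + t) + (1 - t) * log (1 - t)) (𝓝[>] 0) (𝓝 0) := by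
    have : Continuous fun t : ℝ => (1 + t) * log (1 + t) + (1 - t) * log (1 - t) := by fun_prop
    simpa using (this.tendsto 0).mono_left nhdsWithin_le_nhds
  have hsq : Tendsto (fun t : ℝ => t ^ 2) (𝓝[>] 0) (𝓝 0) := by
    simpa using ((continuous_pow 2).tendsto (0 : ℝ)).mono_left nhdsWithin_le_nhds
  have hA := (hasDerivAt_artanh (x := 0) ⟨by norm_num, by norm_num⟩).tendsto_div_nhdsGT_zero
    artanh_zero
  rw [show (1 - (0 : ℝ) ^ 2)⁻¹ = 1 by norm_num] at hA
  refine HasDerivAt.lhopital_zero_right_on_Ioo zero_lt_one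
    (f' := fun t => log (1 + t) - log (1 - t)) (g' := fun t => 2 * t)
    (fun t ht => ((hasDerivAt_one_add_mul_log (by linarith [ht.1])).fun_add
      (hasDerivAt_one_sub_mul_log ht.2)).congr_deriv (by ring))
    (fun t _ => (hasDerivAt_pow 2 t).congr_deriv (by ring))
    (fun t ht => by simp [ht.1.ne']) hQ hsq (hA.congr' ?_)
  filter_upwards [Ioo_mem_nhdsGT zero_lt_one] with t ht
  rw [artanh_eq_half_log_sub ⟨by linarith [ht.1], ht.2⟩]
  field_simp

theorem tendsto_psi_nhdsGT_zero : Tendsto psi (𝓝[>] 0) (𝓝 1) := by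
  show Tendsto (fun t => exp (mu t) * nu t) _ _
  simpa using ((continuous_exp.tendsto 0).comp tendsto_mu_nhdsGT_zero).mul tendsto_nu_nhdsGT_zero

theorem one_le_psi {t : ℝ} (ht : t ∈ Ioo 0 1) : 1 ≤ psi t :=
  (monotoneOn_psi.mono Ioo_subset_Ioc_self).ge_of_tendsto_nhdsGT tendsto_psi_nhdsGT_zero ht

theorem psi_le {t : ℝ} (ht : t ∈ Ioo 0 1) : psi t ≤ 4 * log 2 / exp 1 :=
  psi_one ▸ monotoneOn_psi ⟨ht.1, ht.2.le⟩ ⟨zero_lt_one, le_rfl⟩ ht.2.le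

theorem identricMean_div_lambdaOne {c t : ℝ} (hc : 0 < c) (ht : t ∈ Ioo (-1) 1) (ht0 : t ≠ 0) :
    identricMean (c * (1 - t)) (c * (1 + t)) / lambdaOne (c * (1 - t)) (c * (1 + t)) = psi t := by
  have h1 : 0 < 1 + t := by linarith [ht.1]
  have h2 : 0 < 1 - t := by linarith [ht.2]
  have hsub : c * (1 + t) - c * (1 - t) = 2 * c * t := by ring
  have hlog1 : log (c * (1 + t)) = log c + log (1 + t) := log_mul hc.ne' h1.ne'
  have hlog2 : log (c * (1 - t)) = log c + log (1 - t) := log_mul hc.ne' h2.ne'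
  have hI : identricMean (c * (1 - t)) (c * (1 + t)) = c * exp (mu t) := by
    have hpow (u : ℝ) (hu : 0 < u) : 0 < (c * u) ^ (c * u) := rpow_pos_of_pos (by positivity) _
    rw [identricMean, rpow_def_of_pos (div_pos (hpow _ h1) (hpow _ h2)),
      log_div (hpow _ h1).ne' (hpow _ h2).ne', log_rpow (by positivity), log_rpow (by positivity),
      hlog1, hlog2, hsub]
    rw [show (c * (1 + t) * (log c + log (1 + t)) - c * (1 - t) * (log c + log (1 - t))) *
        (1 / (2 * c * t)) = 1 + (log c + mu t) by
      simp only [mu]; field_simp; ring]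
    rw [exp_add, exp_add, exp_log hc]
    field_simp
  rw [hI, lambdaOne, hlog1, hlog2, hsub, show (c * (1 - t) + c * (1 + t)) / 2 = c by ring,
    div_div_eq_mul_div, psi, nu]
  field_simp
  ring

end IdentricRatio

open IdentricRatio in
theorem stmt19 (a b : ℝ) (ha : 0 < a) (hb : 0 < b) (hab : a ≠ b) :
    1 ≤ ((1 / Real.exp 1) * (b ^ b / a ^ a) ^ (1 / (b - a))) /
        ((b - a) ^ 2 /
          (4 * (a * Real.log a + b * Real.log b - (a + b) * Real.log ((a + b) / 2)))) ∧
    ((1 / Real.exp 1) * (b ^ b / a ^ a) ^ (1 / (b - a))) /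
        ((b - a) ^ 2 /
          (4 * (a * Real.log a + b * Real.log b - (a + b) * Real.log ((a + b) / 2)))) ≤
      4 * Real.log 2 / Real.exp 1 := by
  obtain ⟨c, t, hc, ht, ht0, rfl, rfl⟩ : ∃ c t : ℝ, 0 < c ∧ t ∈ Ioo (-1) 1 ∧ t ≠ 0 ∧
      a = c * (1 - t) ∧ b = c * (1 + t) := by
    refine ⟨(a + b) / 2, (b - a) / (a + b), by positivity, ⟨?_, ?_⟩,
      div_ne_zero (sub_ne_zero.2 hab.symm) (by positivity), ?_, ?_⟩
    · rw [lt_div_iff₀ (by positivity)]; linarith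
    · rw [div_lt_one (by positivity)]; linarith
    all_goals field_simp; ring
  have habs : |t| ∈ Ioo 0 1 := ⟨abs_pos.2 ht0, abs_lt.2 ht⟩
  change 1 ≤ identricMean _ _ / lambdaOne _ _ ∧ identricMean _ _ / lambdaOne _ _ ≤ _
  rw [identricMean_div_lambdaOne hc ht ht0, ← psi_abs]
  exact ⟨one_le_psi habs, psi_le habs⟩
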